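/- arXiv:math/0412012 — 5 statements merged into one kernel-verified Lean document; each statement's English description precedes it below -/
import Mathlib

section
/- For k ≥ 0 and q a nonzero real (or an indeterminate), with p_r = ∏_{t=1}^r (1 + q^{-t}), one has ∑_{r=0}^k C(k,r)_q (-1)^{k-r} q^{r(r-k+1)} p_r p_{k-r+1} = q^{-k} ∑_{r=0}^k C(k,r)_q (-1)^{k-r} q^{r(r-k+2)} p_{r+1} p_{k-r}, where C(k,r)_q denotes the Gaussian (q-)binomial coefficient. -/
/-- The q-Pochhammer symbol `(t; q)_m = ∏_{s=0}^{m-1} (1 - t q^s)`. -/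
noncomputable def qPoch (q t : ℝ) (m : ℕ) : ℝ := ∏ s ∈ Finset.range m, (1 - t * q ^ s)

/-- The Gaussian (q-)binomial coefficient `C(k, r)_q = (q;q)_k / ((q;q)_r (q;q)_{k-r})`. -/
noncomputable def qBinom (q : ℝ) (k r : ℕ) : ℝ :=
  qPoch q q k / (qPoch q q r * qPoch q q (k - r))

/-- `p_r = ∏_{t=1}^{r} (1 + q^{-t})`. -/
noncomputable def pSeq (q : ℝ) (r : ℕ) : ℝ :=
  ∏ t ∈ Finset.range r, (1 + q ^ (-(t + 1 : ℤ)))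

lemma qPoch_zero (q : ℝ) : qPoch q q 0 = 1 := by simp [qPoch]

lemma qPoch_succ (q : ℝ) (m : ℕ) : qPoch q q (m+1) = qPoch q q m * (1 - q^(m+1)) := by
  rw [qPoch, Finset.prod_range_succ, ← qPoch, pow_succ]; ring

lemma qPoch_ne_zero {q : ℝ} (hq1 : q ≠ 1) (hqm1 : q ≠ -1) (m : ℕ) : qPoch q q m ≠ 0 := by
  unfold qPoch
  refine Finset.prod_ne_zero_iff.mpr fun s _ => ?_
  intro h
  have hqs : q ^ (s+1) = 1 := by rw [pow_succ']; linarith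
  rcases (pow_eq_one_iff_cases).mp hqs with h | h | h
  · omega
  · exact hq1 h
  · exact hqm1 h.1

lemma pSeq_succ (q : ℝ) (n : ℕ) : pSeq q (n+1) = pSeq q n * (1 + q ^ (-(n:ℤ) - 1)) := by
  rw [pSeq, Finset.prod_range_succ, ← pSeq, show -((n:ℤ)+1) = -(n:ℤ)-1 from by ring]

lemma qBinom_zero {q : ℝ} (k : ℕ) (hP : ∀ m, qPoch q q m ≠ 0) : qBinom q k 0 = 1 := by
  rw [qBinom, qPoch_zero, Nat.sub_zero, one_mul, div_self (hP k)]

lemma qBinom_self {q : ℝ} (k : ℕ) (hP : ∀ m, qPoch q q m ≠ 0) : qBinom q k k = 1 := by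
  rw [qBinom, Nat.sub_self, qPoch_zero, mul_one, div_self (hP k)]

lemma qBinom_pascal {q : ℝ} (hP : ∀ m, qPoch q q m ≠ 0) {k r : ℕ} (h : r < k) :
    qBinom q (k+1) (r+1) = qBinom q k (r+1) + q^(k-r) * qBinom q k r := by
  obtain ⟨m, rfl⟩ : ∃ m, k = r + m + 1 := ⟨k - r - 1, by omega⟩
  have e1 : r + m + 1 + 1 - (r + 1) = m + 1 := by omega
  have e2 : r + m + 1 - (r + 1) = m := by omega
  have e3 : r + m + 1 - r = m + 1 := by omega
  rw [qBinom, qBinom, qBinom, e1, e2, e3]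
  rw [show r + m + 1 + 1 = (r + m + 1) + 1 from rfl, qPoch_succ q (r+m+1),
    qPoch_succ q r, qPoch_succ q m]
  have h1 : qPoch q q r ≠ 0 := hP r
  have h2 : qPoch q q m ≠ 0 := hP m
  have h3 : (1 - q^(r+1)) ≠ 0 := by
    have := hP (r+1); rw [qPoch_succ] at this; exact right_ne_zero_of_mul this
  have h4 : (1 - q^(m+1)) ≠ 0 := by
    have := hP (m+1); rw [qPoch_succ] at this; exact right_ne_zero_of_mul this

  field_simp
  ring_nf


noncomputable def trmF (q : ℝ) (k r : ℕ) : ℝ :=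
  (-1:ℝ)^(k-r) * q^((r:ℤ)*((r:ℤ)-(k:ℤ)+1)) * pSeq q r * pSeq q (k-r)
noncomputable def trmH (q : ℝ) (k r : ℕ) : ℝ :=
  (-1:ℝ)^(k-r) * q^((r:ℤ)*((r:ℤ)-(k:ℤ))) * pSeq q r * pSeq q (k-r)
noncomputable def trmG (q : ℝ) (k r : ℕ) : ℝ :=
  (-1:ℝ)^(k-r) * q^((r:ℤ)*((r:ℤ)-(k:ℤ)+1)+(r:ℤ)) * pSeq q r * pSeq q (k-r)
noncomputable def auxF (q : ℝ) (k : ℕ) : ℝ := ∑ r ∈ Finset.range (k+1), qBinom q k r * trmF q k r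
noncomputable def auxH (q : ℝ) (k : ℕ) : ℝ := ∑ r ∈ Finset.range (k+1), qBinom q k r * trmH q k r
noncomputable def auxG (q : ℝ) (k : ℕ) : ℝ := ∑ r ∈ Finset.range (k+1), qBinom q k r * trmG q k r

lemma termSA {q : ℝ} (hq : q ≠ 0) {k r : ℕ} (hr : r ≤ k) :
    trmF q (k+1) r = -(trmH q k r) - q^(-(k:ℤ)-1) * trmF q k r := by
  rw [trmF, trmH, trmF]
  rw [show (k+1) - r = (k-r) + 1 from by omega, pSeq_succ, pow_succ]
  rw [show ((r:ℤ)*((r:ℤ)-((k+1):ℕ)+1)) = (r:ℤ)*((r:ℤ)-(k:ℤ)) from by push_cast; ring]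
  rw [Nat.cast_sub hr]
  have hm : q ^ ((r:ℤ)*((r:ℤ)-(k:ℤ))) * q ^ (-((k:ℤ)-(r:ℤ))-1)
      = q ^ (-(k:ℤ)-1) * q ^ ((r:ℤ)*((r:ℤ)-(k:ℤ)+1)) := by
    rw [← zpow_add₀ hq, ← zpow_add₀ hq]; congr 1; ring
  linear_combination (-((-1:ℝ)^(k-r) * pSeq q r * pSeq q (k-r))) * hm

lemma termSB {q : ℝ} (hq : q ≠ 0) {k r : ℕ} (hr : r ≤ k) :
    q^(k-r) * trmF q (k+1) (r+1) = q * trmF q k r + trmH q k r := by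
  rw [trmF, trmF, trmH]
  rw [show (k+1) - (r+1) = k - r from by omega, pSeq_succ]
  rw [show (((r+1):ℕ):ℤ)*((((r+1):ℕ):ℤ)-((k+1):ℕ)+1) = ((r:ℤ)+1)*((r:ℤ)-(k:ℤ)+1) from by
    push_cast; ring]
  rw [show (q:ℝ)^(k-r) = q^(((k-r:ℕ)):ℤ) from (zpow_natCast q (k-r)).symm, Nat.cast_sub hr]
  have m1 : q ^ ((k:ℤ)-(r:ℤ)) * q ^ (((r:ℤ)+1)*((r:ℤ)-(k:ℤ)+1))
      = q * q ^ ((r:ℤ)*((r:ℤ)-(k:ℤ)+1)) := by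
    rw [← zpow_add₀ hq, show (k:ℤ)-(r:ℤ) + ((r:ℤ)+1)*((r:ℤ)-(k:ℤ)+1) = 1 + (r:ℤ)*((r:ℤ)-(k:ℤ)+1) from by ring, zpow_add₀ hq, zpow_one]
  have m2 : q ^ ((k:ℤ)-(r:ℤ)) * q ^ (((r:ℤ)+1)*((r:ℤ)-(k:ℤ)+1)) * q ^ (-(r:ℤ)-1)
      = q ^ ((r:ℤ)*((r:ℤ)-(k:ℤ))) := by
    rw [← zpow_add₀ hq, ← zpow_add₀ hq]; congr 1; ring
  linear_combination ((-1:ℝ)^(k-r) * pSeq q r * pSeq q (k-r)) * m1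
    + ((-1:ℝ)^(k-r) * pSeq q r * pSeq q (k-r)) * m2

lemma termSAG {q : ℝ} (hq : q ≠ 0) {k r : ℕ} (hr : r ≤ k) :
    trmG q (k+1) r = -(trmF q k r) - q^(-(k:ℤ)-1) * trmG q k r := by
  rw [trmG, trmF, trmG]
  rw [show (k+1) - r = (k-r) + 1 from by omega, pSeq_succ, pow_succ]
  rw [show ((r:ℤ)*((r:ℤ)-((k+1):ℕ)+1)+(r:ℤ)) = (r:ℤ)*((r:ℤ)-(k:ℤ)+1) from by push_cast; ring]
  rw [Nat.cast_sub hr]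
  have hm : q ^ ((r:ℤ)*((r:ℤ)-(k:ℤ)+1)) * q ^ (-((k:ℤ)-(r:ℤ))-1)
      = q ^ (-(k:ℤ)-1) * q ^ ((r:ℤ)*((r:ℤ)-(k:ℤ)+1)+(r:ℤ)) := by
    rw [← zpow_add₀ hq, ← zpow_add₀ hq]; congr 1; ring
  linear_combination (-((-1:ℝ)^(k-r) * pSeq q r * pSeq q (k-r))) * hm

lemma termSBG {q : ℝ} (hq : q ≠ 0) {k r : ℕ} (hr : r ≤ k) :
    q^(k-r) * trmG q (k+1) (r+1) = q^2 * trmG q k r + q * trmF q k r := by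
  rw [trmG, trmG, trmF]
  rw [show (k+1) - (r+1) = k - r from by omega, pSeq_succ]
  rw [show ((((r+1):ℕ):ℤ)*((((r+1):ℕ):ℤ)-((k+1):ℕ)+1)+(((r+1):ℕ):ℤ))
      = ((r:ℤ)+1)*((r:ℤ)-(k:ℤ)+2) from by push_cast; ring]
  rw [show (q:ℝ)^(k-r) = q^(((k-r:ℕ)):ℤ) from (zpow_natCast q (k-r)).symm, Nat.cast_sub hr]
  have m1 : q ^ ((k:ℤ)-(r:ℤ)) * q ^ (((r:ℤ)+1)*((r:ℤ)-(k:ℤ)+2))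
      = q^2 * q ^ ((r:ℤ)*((r:ℤ)-(k:ℤ)+1)+(r:ℤ)) := by
    rw [← zpow_add₀ hq, show (k:ℤ)-(r:ℤ) + ((r:ℤ)+1)*((r:ℤ)-(k:ℤ)+2)
      = 2 + ((r:ℤ)*((r:ℤ)-(k:ℤ)+1)+(r:ℤ)) from by ring, zpow_add₀ hq]
    rw [zpow_two]; ring
  have m2 : q ^ ((k:ℤ)-(r:ℤ)) * q ^ (((r:ℤ)+1)*((r:ℤ)-(k:ℤ)+2)) * q ^ (-(r:ℤ)-1)
      = q * q ^ ((r:ℤ)*((r:ℤ)-(k:ℤ)+1)) := by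
    rw [← zpow_add₀ hq, ← zpow_add₀ hq, show (k:ℤ)-(r:ℤ) + ((r:ℤ)+1)*((r:ℤ)-(k:ℤ)+2) + (-(r:ℤ)-1)
      = 1 + (r:ℤ)*((r:ℤ)-(k:ℤ)+1) from by ring, zpow_add₀ hq, zpow_one]
  linear_combination ((-1:ℝ)^(k-r) * pSeq q r * pSeq q (k-r)) * m1
    + ((-1:ℝ)^(k-r) * pSeq q r * pSeq q (k-r)) * m2

lemma recF {q : ℝ} (hq : q ≠ 0) (hP : ∀ m, qPoch q q m ≠ 0) (k : ℕ) :
    auxF q (k+1) = (q - q^(-(k:ℤ)-1)) * auxF q k := by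
  have hSA : ∑ r ∈ Finset.range (k+1), qBinom q k r * trmF q (k+1) r
      = -auxH q k - q^(-(k:ℤ)-1) * auxF q k := by
    rw [auxH, auxF, Finset.mul_sum, ← Finset.sum_neg_distrib, ← Finset.sum_sub_distrib]
    refine Finset.sum_congr rfl fun r hr => ?_
    rw [termSA hq (Nat.lt_succ_iff.mp (Finset.mem_range.mp hr))]; ring
  have hSB : ∑ r ∈ Finset.range (k+1), q^(k-r) * (qBinom q k r * trmF q (k+1) (r+1))
      = q * auxF q k + auxH q k := by
    rw [auxH, auxF, Finset.mul_sum, ← Finset.sum_add_distrib]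
    refine Finset.sum_congr rfl fun r hr => ?_
    have h := termSB hq (Nat.lt_succ_iff.mp (Finset.mem_range.mp hr))
    linear_combination qBinom q k r * h
  rw [auxF, Finset.sum_range_succ', Finset.sum_range_succ]
  have hmid : ∑ r ∈ Finset.range k, qBinom q (k+1) (r+1) * trmF q (k+1) (r+1)
      = ∑ r ∈ Finset.range k, (qBinom q k (r+1) * trmF q (k+1) (r+1)
          + q^(k-r) * (qBinom q k r * trmF q (k+1) (r+1))) := by
    refine Finset.sum_congr rfl fun r hr => ?_
    rw [qBinom_pascal hP (Finset.mem_range.mp hr)]; ring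
  rw [hmid, Finset.sum_add_distrib]
  have hA : (∑ r ∈ Finset.range k, qBinom q k (r+1) * trmF q (k+1) (r+1))
      + qBinom q (k+1) 0 * trmF q (k+1) 0
      = ∑ r ∈ Finset.range (k+1), qBinom q k r * trmF q (k+1) r := by
    rw [Finset.sum_range_succ' (fun r => qBinom q k r * trmF q (k+1) r) k,
      qBinom_zero _ hP, qBinom_zero _ hP]
  have hB : (∑ r ∈ Finset.range k, q^(k-r) * (qBinom q k r * trmF q (k+1) (r+1)))
      + qBinom q (k+1) (k+1) * trmF q (k+1) (k+1)
      = ∑ r ∈ Finset.range (k+1), q^(k-r) * (qBinom q k r * trmF q (k+1) (r+1)) := by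
    rw [Finset.sum_range_succ (fun r => q^(k-r) * (qBinom q k r * trmF q (k+1) (r+1))) k,
      qBinom_self _ hP, qBinom_self _ hP, Nat.sub_self, pow_zero]
    ring
  linear_combination hA + hB + hSA + hSB

lemma recG {q : ℝ} (hq : q ≠ 0) (hP : ∀ m, qPoch q q m ≠ 0) (k : ℕ) :
    auxG q (k+1) = (q^2 - q^(-(k:ℤ)-1)) * auxG q k + (q - 1) * auxF q k := by
  have hSA : ∑ r ∈ Finset.range (k+1), qBinom q k r * trmG q (k+1) r
      = -auxF q k - q^(-(k:ℤ)-1) * auxG q k := by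
    rw [auxG, auxF, Finset.mul_sum, ← Finset.sum_neg_distrib, ← Finset.sum_sub_distrib]
    refine Finset.sum_congr rfl fun r hr => ?_
    rw [termSAG hq (Nat.lt_succ_iff.mp (Finset.mem_range.mp hr))]; ring
  have hSB : ∑ r ∈ Finset.range (k+1), q^(k-r) * (qBinom q k r * trmG q (k+1) (r+1))
      = q^2 * auxG q k + q * auxF q k := by
    rw [auxG, auxF, Finset.mul_sum, Finset.mul_sum, ← Finset.sum_add_distrib]
    refine Finset.sum_congr rfl fun r hr => ?_
    have h := termSBG hq (Nat.lt_succ_iff.mp (Finset.mem_range.mp hr))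
    linear_combination qBinom q k r * h
  rw [auxG, Finset.sum_range_succ', Finset.sum_range_succ]
  have hmid : ∑ r ∈ Finset.range k, qBinom q (k+1) (r+1) * trmG q (k+1) (r+1)
      = ∑ r ∈ Finset.range k, (qBinom q k (r+1) * trmG q (k+1) (r+1)
          + q^(k-r) * (qBinom q k r * trmG q (k+1) (r+1))) := by
    refine Finset.sum_congr rfl fun r hr => ?_
    rw [qBinom_pascal hP (Finset.mem_range.mp hr)]; ring
  rw [hmid, Finset.sum_add_distrib]
  have hA : (∑ r ∈ Finset.range k, qBinom q k (r+1) * trmG q (k+1) (r+1))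
      + qBinom q (k+1) 0 * trmG q (k+1) 0
      = ∑ r ∈ Finset.range (k+1), qBinom q k r * trmG q (k+1) r := by
    rw [Finset.sum_range_succ' (fun r => qBinom q k r * trmG q (k+1) r) k,
      qBinom_zero _ hP, qBinom_zero _ hP]
  have hB : (∑ r ∈ Finset.range k, q^(k-r) * (qBinom q k r * trmG q (k+1) (r+1)))
      + qBinom q (k+1) (k+1) * trmG q (k+1) (k+1)
      = ∑ r ∈ Finset.range (k+1), q^(k-r) * (qBinom q k r * trmG q (k+1) (r+1)) := by
    rw [Finset.sum_range_succ (fun r => q^(k-r) * (qBinom q k r * trmG q (k+1) (r+1))) k,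
      qBinom_self _ hP, qBinom_self _ hP, Nat.sub_self, pow_zero]
    ring
  linear_combination hA + hB + hSA + hSB

lemma master {q : ℝ} (hq : q ≠ 0) (hP : ∀ m, qPoch q q m ≠ 0) (k : ℕ) :
    (q^((k:ℤ)+1) - 1) * auxF q k = (q - 1) * auxG q k := by
  induction k with
  | zero =>
    have h0 : auxF q 0 = 1 := by
      rw [auxF, Finset.sum_range_one, qBinom_zero _ hP, trmF]
      norm_num [pSeq]
    have h0' : auxG q 0 = 1 := by
      rw [auxG, Finset.sum_range_one, qBinom_zero _ hP, trmG]
      norm_num [pSeq]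
    rw [h0, h0']
    norm_num
  | succ k IH =>
    rw [recF hq hP, recG hq hP]
    have ha0 : q^((k:ℤ)+1) ≠ 0 := zpow_ne_zero _ hq
    have h1 : q ^ ((((k+1):ℕ):ℤ)+1) = q * q^((k:ℤ)+1) := by
      rw [show (((k+1):ℕ):ℤ)+1 = 1 + ((k:ℤ)+1) from by push_cast; ring, zpow_add₀ hq, zpow_one]
    have hb : q^((k:ℤ)+1) * q^(-(k:ℤ)-1) = 1 := by
      rw [← zpow_add₀ hq, show (k:ℤ)+1 + (-(k:ℤ)-1) = 0 from by ring, zpow_zero]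
    rw [h1]
    linear_combination (q^2 - q^(-(k:ℤ)-1)) * IH - (q-1) * auxF q k * hb

lemma lhs_eq {q : ℝ} (hq : q ≠ 0) (k : ℕ) :
    ∑ r ∈ Finset.range (k + 1),
        qBinom q k r * (-1 : ℝ) ^ (k - r) * q ^ ((r : ℤ) * ((r : ℤ) - (k : ℤ) + 1)) *
          pSeq q r * pSeq q (k - r + 1)
      = auxF q k + q^(-(k:ℤ)-1) * auxG q k := by
  rw [auxF, auxG, Finset.mul_sum, ← Finset.sum_add_distrib]
  refine Finset.sum_congr rfl fun r hr => ?_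
  have hr' : r ≤ k := Nat.lt_succ_iff.mp (Finset.mem_range.mp hr)
  rw [trmF, trmG, pSeq_succ, Nat.cast_sub hr']
  have hm : q ^ ((r:ℤ)*((r:ℤ)-(k:ℤ)+1)) * q ^ (-((k:ℤ)-(r:ℤ))-1)
      = q ^ (-(k:ℤ)-1) * q ^ ((r:ℤ)*((r:ℤ)-(k:ℤ)+1)+(r:ℤ)) := by
    rw [← zpow_add₀ hq, ← zpow_add₀ hq]; congr 1; ring
  linear_combination (qBinom q k r * (-1:ℝ)^(k-r) * pSeq q r * pSeq q (k-r)) * hm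

lemma rhs_eq {q : ℝ} (hq : q ≠ 0) (k : ℕ) :
    ∑ r ∈ Finset.range (k + 1),
        qBinom q k r * (-1 : ℝ) ^ (k - r) * q ^ ((r : ℤ) * ((r : ℤ) - (k : ℤ) + 2)) *
          pSeq q (r + 1) * pSeq q (k - r)
      = auxG q k + q⁻¹ * auxF q k := by
  rw [auxF, auxG, Finset.mul_sum, ← Finset.sum_add_distrib]
  refine Finset.sum_congr rfl fun r hr => ?_
  rw [trmF, trmG, pSeq_succ]
  rw [show ((r:ℤ)*((r:ℤ)-(k:ℤ)+2)) = (r:ℤ)*((r:ℤ)-(k:ℤ)+1)+(r:ℤ) from by ring]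
  have hm : q ^ ((r:ℤ)*((r:ℤ)-(k:ℤ)+1)+(r:ℤ)) * q ^ (-(r:ℤ)-1)
      = q⁻¹ * q ^ ((r:ℤ)*((r:ℤ)-(k:ℤ)+1)) := by
    rw [← zpow_add₀ hq, show (r:ℤ)*((r:ℤ)-(k:ℤ)+1)+(r:ℤ) + (-(r:ℤ)-1)
      = -1 + (r:ℤ)*((r:ℤ)-(k:ℤ)+1) from by ring, zpow_add₀ hq, zpow_neg_one]
  linear_combination (qBinom q k r * (-1:ℝ)^(k-r) * pSeq q r * pSeq q (k-r)) * hm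

theorem stmt0 (q : ℝ) (hq : q ≠ 0) (k : ℕ) :
    ∑ r ∈ Finset.range (k + 1),
        qBinom q k r * (-1 : ℝ) ^ (k - r) * q ^ ((r : ℤ) * ((r : ℤ) - (k : ℤ) + 1)) *
          pSeq q r * pSeq q (k - r + 1)
      = q ^ (-(k : ℤ)) *
        ∑ r ∈ Finset.range (k + 1),
          qBinom q k r * (-1 : ℝ) ^ (k - r) * q ^ ((r : ℤ) * ((r : ℤ) - (k : ℤ) + 2)) *
            pSeq q (r + 1) * pSeq q (k - r) := by
  rcases eq_or_ne q 1 with rfl | hq1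
  · rcases k with _ | m
    · norm_num [qBinom, qPoch, pSeq]
    · have hz : ∀ r : ℕ, qBinom 1 (m+1) r = 0 := fun r => by
        rw [qBinom, qPoch_succ]; norm_num
      rw [Finset.sum_eq_zero fun r _ => by rw [hz]; ring,
          Finset.sum_eq_zero fun r _ => by rw [hz]; ring]
      ring
  rcases eq_or_ne q (-1) with rfl | hqm1
  · rcases k with _ | _ | m
    · norm_num [qBinom, qPoch, pSeq]
    · have p1 : pSeq (-1) 1 = 0 := by norm_num [pSeq]
      have p2 : pSeq (-1) 2 = 0 := by rw [show (2:ℕ) = 1 + 1 from rfl, pSeq_succ, p1, zero_mul]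
      norm_num [Finset.sum_range_succ, p1, p2]
    · have h0 : qPoch (-1) (-1) (m+2) = 0 :=
        Finset.prod_eq_zero (Finset.mem_range.mpr (by omega : 1 < m+2)) (by norm_num)
      have hz : ∀ r : ℕ, qBinom (-1) (m+2) r = 0 := fun r => by
        rw [qBinom, h0, zero_div]
      rw [Finset.sum_eq_zero fun r _ => by rw [hz]; ring,
          Finset.sum_eq_zero fun r _ => by rw [hz]; ring]
      ring
  · have hP := qPoch_ne_zero hq1 hqm1
    rw [lhs_eq hq, rhs_eq hq]
    have hM := master hq hP k
    have h2 : q^(-(k:ℤ)-1) * q^((k:ℤ)+1) = 1 := by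
      rw [← zpow_add₀ hq, show -(k:ℤ)-1 + ((k:ℤ)+1) = 0 from by ring, zpow_zero]
    have h3 : q⁻¹ * q = 1 := inv_mul_cancel₀ hq
    have h4 : q * q^(-(k:ℤ)-1) = q^(-(k:ℤ)) := by
      rw [← zpow_one_add₀ hq]; congr 1; ring
    linear_combination q^(-(k:ℤ)-1) * hM - auxF q k * h2
      + (auxG q k + q⁻¹ * auxF q k) * h4 - q^(-(k:ℤ)-1) * auxF q k * h3
end

section
/- Let p_ν be polynomials defined by p_0 = 1, p_{1/2}(s) = s, p_{ν+1/2}(s) = s·p_ν(s) − p_{ν−1/2}(s). If t_0 ≥ 2 is a real number such that p_ν(t_0) ≤ (2ν+1)^2 for all half-integers ν ≥ 0, then t_0 = 2, and consequently p_ν(t_0) = 2ν+1 for all ν. -/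
open Polynomial

/-- The Chebyshev-like polynomials `p_ν` indexed by `n = 2ν`:
`p_0 = 1`, `p_{1/2} = X`, `p_{ν+1/2} = X · p_ν − p_{ν−1/2}`. -/
noncomputable def pPoly : ℕ → Polynomial ℝ
  | 0 => 1
  | 1 => X
  | n + 2 => X * pPoly (n + 1) - pPoly n

lemma pPoly_eval_two : ∀ n : ℕ, (pPoly n).eval 2 = (n : ℝ) + 1 ∧
    (pPoly (n + 1)).eval 2 = (n : ℝ) + 2 := by
  intro n
  induction n with
  | zero => simp [pPoly]
  | succ n ih =>
    refine ⟨by push_cast; linarith [ih.2], ?_⟩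
    show (X * pPoly (n + 1) - pPoly n).eval 2 = _
    simp only [eval_sub, eval_mul, eval_X]
    push_cast
    linarith [ih.1, ih.2]

theorem stmt3 (t0 : ℝ) (ht0 : 2 ≤ t0)
    (hb : ∀ n : ℕ, (pPoly n).eval t0 ≤ (2 * ((n : ℝ) / 2) + 1) ^ 2) :
    t0 = 2 ∧ ∀ n : ℕ, (pPoly n).eval t0 = 2 * ((n : ℝ) / 2) + 1 := by
  have hε0 : 0 ≤ t0 - 2 := by linarith
  set ε : ℝ := t0 - 2 with hεdef
  clear_value ε
  -- Lemma A: linear lower bound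
  have hA : ∀ n : ℕ, ((n : ℝ) + 1) ≤ (pPoly n).eval t0 ∧
      (pPoly n).eval t0 + 1 ≤ (pPoly (n + 1)).eval t0 := by
    intro n
    induction n with
    | zero =>
      simp [pPoly]
      linarith
    | succ n ih =>
      obtain ⟨h1, h2⟩ := ih
      have hn1 : ((n : ℝ) + 2) ≤ (pPoly (n + 1)).eval t0 := by linarith
      refine ⟨by push_cast; linarith, ?_⟩
      have he : (pPoly (n + 2)).eval t0 = t0 * (pPoly (n + 1)).eval t0
          - (pPoly n).eval t0 := by
        show (X * pPoly (n + 1) - pPoly n).eval t0 = _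
        simp
      have hm : 0 ≤ ε * (pPoly (n + 1)).eval t0 :=
        mul_nonneg hε0 (by linarith)
      have hid : t0 * (pPoly (n + 1)).eval t0
          = 2 * (pPoly (n + 1)).eval t0 + ε * (pPoly (n + 1)).eval t0 := by
        rw [hεdef]; ring
      rw [he]
      linarith
  -- auxiliary cubic coefficient
  set a : ℕ → ℝ := fun n => (n : ℝ) * ((n : ℝ) + 1) * ((n : ℝ) + 2) / 6 with ha
  -- Lemma B: cubic lower bound
  have hB : ∀ n : ℕ, ((n : ℝ) + 1) + a n * ε ≤ (pPoly n).eval t0 ∧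
      (pPoly n).eval t0 + (1 + (a (n + 1) - a n) * ε) ≤ (pPoly (n + 1)).eval t0 := by
    intro n
    induction n with
    | zero =>
      refine ⟨?_, ?_⟩
      · simp [pPoly, ha]
      · simp only [pPoly, ha, eval_one, eval_X]
        norm_num
        linarith
    | succ n ih =>
      obtain ⟨h1, h2⟩ := ih
      have ha1 : a (n + 1) = ((n : ℝ) + 1) * ((n : ℝ) + 2) * ((n : ℝ) + 3) / 6 := by
        simp [ha]; push_cast; ring
      have ha2 : a (n + 2) = ((n : ℝ) + 2) * ((n : ℝ) + 3) * ((n : ℝ) + 4) / 6 := by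
        simp [ha]; push_cast; ring
      have ha0 : a n = (n : ℝ) * ((n : ℝ) + 1) * ((n : ℝ) + 2) / 6 := by simp [ha]
      rw [ha0] at h1
      refine ⟨by push_cast; rw [ha1]; rw [ha1, ha0] at h2; linarith, ?_⟩
      have he : (pPoly (n + 2)).eval t0 = t0 * (pPoly (n + 1)).eval t0
          - (pPoly n).eval t0 := by
        show (X * pPoly (n + 1) - pPoly n).eval t0 = _
        simp
      have hn1 : ((n : ℝ) + 2) ≤ (pPoly (n + 1)).eval t0 := by
        have := (hA (n + 1)).1
        push_cast at this
        linarith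
      have hm : ε * ((n : ℝ) + 2) ≤ ε * (pPoly (n + 1)).eval t0 :=
        mul_le_mul_of_nonneg_left hn1 hε0
      have hid : t0 * (pPoly (n + 1)).eval t0
          = 2 * (pPoly (n + 1)).eval t0 + ε * (pPoly (n + 1)).eval t0 := by
        rw [hεdef]; ring
      have hPid : (((n : ℝ) + 2) * ((n : ℝ) + 3) * ((n : ℝ) + 4) / 6
            - ((n : ℝ) + 1) * ((n : ℝ) + 2) * ((n : ℝ) + 3) / 6) * ε
          = (((n : ℝ) + 1) * ((n : ℝ) + 2) * ((n : ℝ) + 3) / 6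
            - (n : ℝ) * ((n : ℝ) + 1) * ((n : ℝ) + 2) / 6) * ε + ε * ((n : ℝ) + 2) := by
        ring
      rw [he, ha1, ha2]
      rw [ha0, ha1] at h2
      linarith
  -- conclude ε = 0
  have hεeq : ε = 0 := by
    by_contra h
    have hεpos : 0 < ε := lt_of_le_of_ne hε0 (Ne.symm h)
    obtain ⟨n, hn⟩ := exists_nat_gt (6 / ε)
    have hn6 : 6 < (n : ℝ) * ε := by
      rw [div_lt_iff₀ hεpos] at hn
      linarith
    have hn0 : (0 : ℝ) < n := by
      by_contra hc
      push_neg at hc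
      nlinarith
    have hub := hb n
    have hlb := (hB n).1
    have hquad : (2 * ((n : ℝ) / 2) + 1) ^ 2 = ((n : ℝ) + 1) ^ 2 := by ring
    rw [hquad] at hub
    have hthis : a n * ε ≤ (n : ℝ) * ((n : ℝ) + 1) := by nlinarith
    simp only [ha] at hthis
    have hpp : (0 : ℝ) < (n : ℝ) * ((n : ℝ) + 1) := by nlinarith
    have hbig := mul_lt_mul_of_pos_left hn6 hpp
    have hprod : 0 ≤ (n : ℝ) * ((n : ℝ) + 1) * ε := by positivity
    nlinarith [hthis, hbig, hprod]
  have ht2 : t0 = 2 := by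
    have := hεdef.symm.trans hεeq
    linarith
  refine ⟨ht2, fun n => ?_⟩
  rw [ht2, (pPoly_eval_two n).1]
  ring
end

section
/- Let m ≥ 3/2 be a half-integer and 0 ≤ χ < 2π. The solution space of the recurrence −i e^{iχ} √((m+t)(m+t+1)) d_{t+1} + i e^{−iχ} √((m−t)(m−t+1)) d_{t−1} = 0 for t ∈ {−m, …, m} (with d_t = 0 for |t| ≥ m+1) is two-dimensional, spanned by d_t = e^{i(m−t)χ} · binom(2m, m−t)^{1/2} and d_t = (−1)^{m−t} e^{i(m−t)χ} · binom(2m, m−t)^{1/2}. -/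
/-!
In the equation at `k` the coefficient of `d (k + 1)` vanishes only at `k = 0` and that of
`d (k - 1)` only at `k = M`, so the recurrence is a two-step recursion and a solution is determined
by `d 0` and `d 1`. The vector `evec` solves it because of the binomial identity
`k (k + 1) C(M, M - k - 1) = (M - k) (M - k + 1) C(M, M - k + 1)`, and `fvec` because the sign
`(-1)^(M - k)` is the same at `k - 1` and `k + 1`. At `k = 0, 1` we have `fvec = ± evec` with
opposite signs, so the two solutions are independent and span.
-/

/-- The eigenvector `e_t = e^{i(m−t)χ} binom(2m, m−t)^{1/2}`, encoded with `m = M/2`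
(`M` odd), `t = k − m`, so that `m − t = M − k` and `binom(2m, m−t) = binom(M, M−k)`. -/
noncomputable def evec (M : ℕ) (χ : ℝ) (k : ℤ) : ℂ :=
  if 0 ≤ k ∧ k ≤ (M : ℤ) then
    Complex.exp (Complex.I * (((M : ℝ) - (k : ℝ) : ℝ) : ℂ) * (χ : ℂ)) *
      (Real.sqrt (Nat.choose M ((M : ℤ) - k).toNat) : ℂ)
  else 0

/-- The second eigenvector `f_t = (−1)^{m−t} e_t`. -/
noncomputable def fvec (M : ℕ) (χ : ℝ) (k : ℤ) : ℂ :=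
  (-1 : ℂ) ^ ((M : ℤ) - k) * evec M χ k

/-- `d` solves the recurrence
`−i e^{iχ} √((m+t)(m+t+1)) d_{t+1} + i e^{−iχ} √((m−t)(m−t+1)) d_{t−1} = 0` on `I_m`,
with `d_t = 0` for `|t| ≥ m+1`; here `m + t = k` and `m − t = M − k`. -/
def IsSol8 (M : ℕ) (χ : ℝ) (d : ℤ → ℂ) : Prop :=
  (∀ k : ℤ, (k < 0 ∨ (M : ℤ) < k) → d k = 0) ∧
  ∀ k : ℤ, 0 ≤ k → k ≤ (M : ℤ) →
    -Complex.I * Complex.exp (Complex.I * (χ : ℂ)) *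
        (Real.sqrt ((k : ℝ) * ((k : ℝ) + 1)) : ℂ) * d (k + 1)
      + Complex.I * Complex.exp (-(Complex.I * (χ : ℂ))) *
        (Real.sqrt (((M : ℝ) - (k : ℝ)) * ((M : ℝ) - (k : ℝ) + 1)) : ℂ) * d (k - 1) = 0

open Complex

lemma mul_choose_add_two_eq {M k i : ℕ} (h : k + i + 1 = M) :
    (i + 1) * (i + 2) * M.choose (i + 2) = k * (k + 1) * M.choose i := by
  have hi₁ : M - (i + 1) = k := by omega
  have hi₀ : M - i = k + 1 := by omega
  calc (i + 1) * (i + 2) * M.choose (i + 2)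
      = (i + 1) * (M.choose (i + 1 + 1) * (i + 1 + 1)) := by ring
    _ = (i + 1) * (M.choose (i + 1) * k) := by rw [Nat.choose_succ_right_eq, hi₁]
    _ = k * (M.choose (i + 1) * (i + 1)) := by ring
    _ = k * (M.choose i * (k + 1)) := by rw [Nat.choose_succ_right_eq, hi₀]
    _ = k * (k + 1) * M.choose i := by ring

lemma sqrt_mul_sqrt_choose_eq {M k i : ℕ} (h : k + i + 1 = M) :
    √((k : ℝ) * (k + 1)) * √(M.choose i : ℝ) =
      √(((i : ℝ) + 1) * (i + 2)) * √(M.choose (i + 2) : ℝ) := by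
  rw [← Real.sqrt_mul (by positivity), ← Real.sqrt_mul (by positivity)]
  exact_mod_cast congrArg Real.sqrt (congrArg (Nat.cast : ℕ → ℝ) (mul_choose_add_two_eq h)).symm

lemma neg_one_pow_sq {R : Type*} [Monoid R] [HasDistribNeg R] (n : ℕ) : ((-1 : R) ^ n) ^ 2 = 1 := by
  rw [← pow_mul, mul_comm, pow_mul, neg_one_sq, one_pow]

section
variable (M : ℕ) (χ : ℝ)

lemma evec_of_lt_zero_or_lt {k : ℤ} (h : k < 0 ∨ (M : ℤ) < k) : evec M χ k = 0 := by
  rw [evec, if_neg]; omega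

lemma evec_natCast {n : ℕ} (h : n ≤ M) :
    evec M χ n = exp (I * ((M - n : ℕ) : ℂ) * χ) * (√(M.choose (M - n) : ℝ) : ℂ) := by
  rw [evec, if_pos ⟨Int.natCast_nonneg n, by exact_mod_cast h⟩,
    show ((M : ℤ) - n).toNat = M - n by omega]
  push_cast [h]
  ring_nf

lemma evec_zero_ne_zero : evec M χ 0 ≠ 0 := by
  have := evec_natCast M χ (Nat.zero_le M)
  simp only [Nat.cast_zero, Nat.sub_zero, Nat.choose_self, Nat.cast_one, Real.sqrt_one,
    ofReal_one, mul_one] at this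
  rw [this]
  exact exp_ne_zero _

lemma evec_one_ne_zero (hM : 1 ≤ M) : evec M χ 1 ≠ 0 := by
  have := evec_natCast M χ hM
  rw [Nat.choose_symm hM, Nat.choose_one_right, Nat.cast_one] at this
  rw [this]
  exact mul_ne_zero (exp_ne_zero _)
    (ofReal_ne_zero.2 (Real.sqrt_pos.2 (by exact_mod_cast hM)).ne')

lemma fvec_zero : fvec M χ 0 = (-1) ^ M * evec M χ 0 := by
  simp [fvec]

lemma fvec_one : fvec M χ 1 = -(-1) ^ M * evec M χ 1 := by
  rw [fvec, zpow_sub₀ (by norm_num), zpow_natCast, zpow_one]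
  ring

lemma isSol8_of_interior {d : ℤ → ℂ} (hout : ∀ k : ℤ, (k < 0 ∨ (M : ℤ) < k) → d k = 0)
    (hint : ∀ k : ℤ, 0 < k → k < (M : ℤ) →
      -I * exp (I * χ) * (√((k : ℝ) * ((k : ℝ) + 1)) : ℂ) * d (k + 1)
        + I * exp (-(I * χ)) * (√(((M : ℝ) - k) * ((M : ℝ) - k + 1)) : ℂ) * d (k - 1) = 0) :
    IsSol8 M χ d := by
  refine ⟨hout, fun k hk₀ hkM => ?_⟩
  rcases hk₀.lt_or_eq with hk₀ | rfl
  · rcases hkM.lt_or_eq with hkM | rfl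
    · exact hint k hk₀ hkM
    · simp [hout (M + 1) (by omega)]
  · simp [hout (-1) (by omega)]

lemma isSol8_evec : IsSol8 M χ (evec M χ) := by
  refine isSol8_of_interior M χ (fun k h => evec_of_lt_zero_or_lt M χ h) fun k hk₀ hkM => ?_
  lift k to ℕ using hk₀.le with n
  obtain ⟨i, hi⟩ : ∃ i, n + i + 1 = M := ⟨M - n - 1, by omega⟩
  rw [show (n : ℤ) + 1 = (n + 1 : ℕ) by push_cast; ring, show (n : ℤ) - 1 = (n - 1 : ℕ) by omega,
    evec_natCast M χ (by omega), evec_natCast M χ (by omega),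
    show M - (n + 1) = i by omega, show M - (n - 1) = i + 2 by omega]
  have hcoeff : ((M : ℝ) - (n : ℤ)) * ((M : ℝ) - (n : ℤ) + 1) = (i + 1) * (i + 2) := by
    rw [← hi]; push_cast; ring
  have hamp := congrArg ofReal (sqrt_mul_sqrt_choose_eq hi)
  have hphase : exp (I * χ) * exp (I * (i : ℂ) * χ) =
      exp (-(I * χ)) * exp (I * ((i + 2 : ℕ) : ℂ) * χ) := by
    rw [← exp_add, ← exp_add]
    push_cast
    ring_nf
  rw [hcoeff]
  push_cast at hamp hphase ⊢
  linear_combination (-I * (exp (I * χ) * exp (I * i * χ))) * hamp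
    + (-I * ((√((i + 1) * (i + 2)) : ℝ) * (√(M.choose (i + 2)) : ℝ) : ℂ)) * hphase

lemma isSol8_fvec : IsSol8 M χ (fvec M χ) := by
  refine ⟨fun k h => by simp [fvec, evec_of_lt_zero_or_lt M χ h], fun k hk₀ hkM => ?_⟩
  have hsucc : (-1 : ℂ) ^ ((M : ℤ) - (k + 1)) = -(-1) ^ ((M : ℤ) - k) := by
    rw [sub_add_eq_sub_sub, zpow_sub₀ (by norm_num), zpow_one, div_neg, div_one]
  have hpred : (-1 : ℂ) ^ ((M : ℤ) - (k - 1)) = -(-1) ^ ((M : ℤ) - k) := by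
    rw [sub_sub_eq_add_sub, add_sub_right_comm, zpow_add₀ (by norm_num), zpow_one, mul_neg_one]
  simp only [fvec, hsucc, hpred]
  linear_combination (-(-1 : ℂ) ^ ((M : ℤ) - k)) * (isSol8_evec M χ).2 k hk₀ hkM

end

namespace IsSol8
variable {M : ℕ} {χ : ℝ} {d d' : ℤ → ℂ}

lemma mul_add_mul (hd : IsSol8 M χ d) (hd' : IsSol8 M χ d') (a b : ℂ) :
    IsSol8 M χ (fun k => a * d k + b * d' k) :=
  ⟨fun k h => by simp [hd.1 k h, hd'.1 k h],
    fun k h₀ h₁ => by linear_combination a * hd.2 k h₀ h₁ + b * hd'.2 k h₀ h₁⟩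

lemma eq_zero (hd : IsSol8 M χ d) (h₀ : d 0 = 0) (h₁ : d 1 = 0) (k : ℤ) : d k = 0 := by
  have hnat : ∀ n : ℕ, d n = 0 := by
    refine Nat.twoStepInduction (by exact_mod_cast h₀) (by exact_mod_cast h₁) fun n hn _ => ?_
    by_cases hnM : (n : ℤ) + 2 ≤ M
    · have hrec := hd.2 (n + 1) (by omega) (by omega)
      have hcoeff :
          -I * exp (I * χ) * (√(((n + 1 : ℤ) : ℝ) * (((n + 1 : ℤ) : ℝ) + 1)) : ℂ) ≠ 0 := by
        refine mul_ne_zero (mul_ne_zero (neg_ne_zero.2 I_ne_zero) (exp_ne_zero _)) ?_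
        exact ofReal_ne_zero.2 (Real.sqrt_pos.2 (by push_cast; positivity)).ne'
      rw [add_sub_cancel_right, hn, mul_zero, add_zero, add_assoc, one_add_one_eq_two] at hrec
      exact_mod_cast (mul_eq_zero.1 hrec).resolve_left hcoeff
    · exact hd.1 _ (Or.inr (by push_cast; omega))
  rcases lt_or_ge k 0 with hk | hk
  · exact hd.1 k (Or.inl hk)
  · lift k to ℕ using hk
    exact hnat k

lemma ext (hd : IsSol8 M χ d) (hd' : IsSol8 M χ d') (h₀ : d 0 = d' 0) (h₁ : d 1 = d' 1) :
    d = d' := by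
  funext k
  have := (hd.mul_add_mul hd' 1 (-1)).eq_zero (by simp [h₀]) (by simp [h₁]) k
  linear_combination this

end IsSol8

section
variable {M : ℕ} (χ : ℝ)

lemma isSol8_iff_exists (hM : 1 ≤ M) (d : ℤ → ℂ) : IsSol8 M χ d ↔
    ∃ a b : ℂ, ∀ k : ℤ, d k = a * evec M χ k + b * fvec M χ k := by
  have he₀ := evec_zero_ne_zero M χ
  have he₁ := evec_one_ne_zero M χ hM
  refine ⟨fun hd => ?_, fun ⟨a, b, h⟩ => ?_⟩
  · set u := d 0 / evec M χ 0
    set v := d 1 / evec M χ 1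
    refine ⟨(u + v) / 2, (-1) ^ M * (u - v) / 2, fun k => congrFun (hd.ext
      ((isSol8_evec M χ).mul_add_mul (isSol8_fvec M χ) _ _) ?_ ?_) k⟩
    · rw [fvec_zero, ← div_mul_cancel₀ (d 0) he₀]
      linear_combination (-(u - v) / 2 * evec M χ 0) * neg_one_pow_sq (R := ℂ) M
    · rw [fvec_one, ← div_mul_cancel₀ (d 1) he₁]
      linear_combination ((u - v) / 2 * evec M χ 1) * neg_one_pow_sq (R := ℂ) M
  · rw [funext h]
    exact (isSol8_evec M χ).mul_add_mul (isSol8_fvec M χ) a b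

lemma linearIndependent_evec_fvec (hM : 1 ≤ M) :
    LinearIndependent ℂ ![evec M χ, fvec M χ] := by
  rw [LinearIndependent.pair_iff]
  intro s t hst
  have h₀ := congrFun hst 0
  have h₁ := congrFun hst 1
  simp only [Pi.add_apply, Pi.smul_apply, smul_eq_mul, Pi.zero_apply, fvec_zero, fvec_one]
    at h₀ h₁
  have hplus : s + (-1) ^ M * t = 0 := by
    refine (mul_eq_zero.1 ?_).resolve_right (evec_zero_ne_zero M χ)
    linear_combination h₀
  have hminus : s - (-1) ^ M * t = 0 := by
    refine (mul_eq_zero.1 ?_).resolve_right (evec_one_ne_zero M χ hM)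
    linear_combination h₁
  constructor
  · linear_combination (hplus + hminus) / 2
  · linear_combination (-1) ^ M * (hplus - hminus) / 2 - t * neg_one_pow_sq (R := ℂ) M

end

theorem stmt8_general (M : ℕ) (hM : 3 ≤ M) (χ : ℝ) :
    (∀ d : ℤ → ℂ, IsSol8 M χ d ↔
      ∃ a b : ℂ, ∀ k : ℤ, d k = a * evec M χ k + b * fvec M χ k) ∧
    LinearIndependent ℂ ![evec M χ, fvec M χ] :=
  ⟨isSol8_iff_exists χ (by omega), linearIndependent_evec_fvec χ (by omega)⟩

/-- the solution space is two-dimensional, spanned by `evec` and `fvec`. -/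
theorem stmt8 (M : ℕ) (hModd : Odd M) (hM : 3 ≤ M) (χ : ℝ) (hχ0 : 0 ≤ χ)
    (hχ1 : χ < 2 * Real.pi) :
    (∀ d : ℤ → ℂ, IsSol8 M χ d ↔
      ∃ a b : ℂ, ∀ k : ℤ, d k = a * evec M χ k + b * fvec M χ k) ∧
    LinearIndependent ℂ ![evec M χ, fvec M χ] :=
  stmt8_general M hM χ
end

section
/- Let m be a half-integer with m ≥ 3/2 and consider real coefficients α_t = (√6/4) s (−1)^{m−t} √(4(m−t−1)(m+t+2)(m+t+1)(m+t)), β_t = √6 s c (m−2t) √((m+t+1)(m+t)), γ_t = 2(−1 + (3/2)s)(−1)^{m−t} t √(6(m+t)(m−t)), δ_t = −√6 s c (m+2t) √((m−t+1)(m−t)), ε_t = −(√6/4) s (−1)^{m−t} √(4(m+t−1)(m−t+2)(m−t+1)(m−t)), where s = sin²ψ, c = cos ψ with 0 < ψ < π/2 (and χ = 0). If for every t ∈ I_m the 3×3 determinant condition α_t δ_{t−1} δ_{t+1} − β_{t+1} γ_t δ_{t−1} + β_{t−1} β_{t+1} ε_t = 0 holds, then evaluating at t = m−1 forces sin²ψ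 = (3m−4)/(5m−8), and (for m ≥ 5/2) evaluating at t = m−2 forces sin²ψ = 12(m−2)²/(5m²−24m+24); these two values are incompatible, and for m = 3/2 the first gives sin²ψ = −1 < 0, a contradiction. Hence no ψ ∈ (0, π/2) satisfies the determinant condition for all t. -/
/-- `α_t = (√6/4) s (−1)^{m−t} √(4(m−t−1)(m+t+2)(m+t+1)(m+t))`, with `s = sin²ψ`,
`m = M/2`, `t = k − m` (so `m − t = M − k ∈ ℤ`). -/
noncomputable def a12 (ψ : ℝ) (M : ℕ) (k : ℤ) : ℝ :=
  let m : ℝ := (M : ℝ) / 2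
  let t : ℝ := (k : ℝ) - m
  (Real.sqrt 6 / 4) * Real.sin ψ ^ 2 * (-1 : ℝ) ^ ((M : ℤ) - k) *
    Real.sqrt (4 * (m - t - 1) * (m + t + 2) * (m + t + 1) * (m + t))

/-- `β_t = √6 s c (m−2t) √((m+t+1)(m+t))` with `s = sin²ψ`, `c = cos ψ`. -/
noncomputable def b12 (ψ : ℝ) (M : ℕ) (k : ℤ) : ℝ :=
  let m : ℝ := (M : ℝ) / 2
  let t : ℝ := (k : ℝ) - m
  Real.sqrt 6 * Real.sin ψ ^ 2 * Real.cos ψ * (m - 2 * t) *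
    Real.sqrt ((m + t + 1) * (m + t))

/-- `γ_t = 2(−1 + (3/2)s)(−1)^{m−t} t √(6(m+t)(m−t))`. -/
noncomputable def g12 (ψ : ℝ) (M : ℕ) (k : ℤ) : ℝ :=
  let m : ℝ := (M : ℝ) / 2
  let t : ℝ := (k : ℝ) - m
  2 * (-1 + (3 / 2) * Real.sin ψ ^ 2) * (-1 : ℝ) ^ ((M : ℤ) - k) * t *
    Real.sqrt (6 * (m + t) * (m - t))

/-- `δ_t = −√6 s c (m+2t) √((m−t+1)(m−t))`. -/
noncomputable def d12 (ψ : ℝ) (M : ℕ) (k : ℤ) : ℝ :=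
  let m : ℝ := (M : ℝ) / 2
  let t : ℝ := (k : ℝ) - m;
  -(Real.sqrt 6) * Real.sin ψ ^ 2 * Real.cos ψ * (m + 2 * t) *
    Real.sqrt ((m - t + 1) * (m - t))

/-- `ε_t = −(√6/4) s (−1)^{m−t} √(4(m+t−1)(m−t+2)(m−t+1)(m−t))`. -/
noncomputable def e12 (ψ : ℝ) (M : ℕ) (k : ℤ) : ℝ :=
  let m : ℝ := (M : ℝ) / 2
  let t : ℝ := (k : ℝ) - m;
  -(Real.sqrt 6 / 4) * Real.sin ψ ^ 2 * (-1 : ℝ) ^ ((M : ℤ) - k) *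
    Real.sqrt (4 * (m + t - 1) * (m - t + 2) * (m - t + 1) * (m - t))

/-- The 3×3 determinant `α_t δ_{t−1} δ_{t+1} − β_{t+1} γ_t δ_{t−1} + β_{t−1} β_{t+1} ε_t`. -/
noncomputable def detC (ψ : ℝ) (M : ℕ) (k : ℤ) : ℝ :=
  a12 ψ M k * d12 ψ M (k - 1) * d12 ψ M (k + 1)
    - b12 ψ M (k + 1) * g12 ψ M k * d12 ψ M (k - 1)
    + b12 ψ M (k - 1) * b12 ψ M (k + 1) * e12 ψ M k

private lemma sqrt_mul5 {a b c d e z X : ℝ} (ha : 0 ≤ a) (hb : 0 ≤ b) (hc : 0 ≤ c)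
    (hd : 0 ≤ d) (hz : 0 ≤ z) (h : a*b*c*d*e = z^2*X) :
    Real.sqrt a * Real.sqrt b * Real.sqrt c * Real.sqrt d * Real.sqrt e = z * Real.sqrt X := by
  rw [← Real.sqrt_mul ha, ← Real.sqrt_mul (mul_nonneg ha hb),
    ← Real.sqrt_mul (mul_nonneg (mul_nonneg ha hb) hc),
    ← Real.sqrt_mul (mul_nonneg (mul_nonneg (mul_nonneg ha hb) hc) hd), h,
    Real.sqrt_mul (sq_nonneg z), Real.sqrt_sq hz]

private lemma sqrt_mul6 {a b c d e f z X : ℝ} (ha : 0 ≤ a) (hb : 0 ≤ b) (hc : 0 ≤ c)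
    (hd : 0 ≤ d) (he : 0 ≤ e) (hz : 0 ≤ z) (h : a*b*c*d*e*f = z^2*X) :
    Real.sqrt a * Real.sqrt b * Real.sqrt c * Real.sqrt d * Real.sqrt e * Real.sqrt f
      = z * Real.sqrt X := by
  rw [← Real.sqrt_mul ha, ← Real.sqrt_mul (mul_nonneg ha hb),
    ← Real.sqrt_mul (mul_nonneg (mul_nonneg ha hb) hc),
    ← Real.sqrt_mul (mul_nonneg (mul_nonneg (mul_nonneg ha hb) hc) hd),
    ← Real.sqrt_mul (mul_nonneg (mul_nonneg (mul_nonneg (mul_nonneg ha hb) hc) hd) he), h,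
    Real.sqrt_mul (sq_nonneg z), Real.sqrt_sq hz]

private lemma keyA (ψ : ℝ) (M : ℕ) (hM : 3 ≤ M) :
    detC ψ M ((M:ℤ)-1) = 36 * (Real.sin ψ^2)^2 * Real.cos ψ^2 * ((M:ℝ)/2) * ((M:ℝ)/2-1)
      * Real.sqrt ((M:ℝ)*((M:ℝ)-1)*((M:ℝ)+1))
      * (Real.sin ψ^2 * (5*(M:ℝ)-16) - (3*(M:ℝ)-8)) := by
  have hMR : (3:ℝ) ≤ (M:ℝ) := by exact_mod_cast hM
  have ha : a12 ψ M ((M:ℤ)-1) = 0 := by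
    unfold a12
    dsimp only
    rw [show (4 * ((M:ℝ)/2 - ((((M:ℤ)-1 : ℤ):ℝ) - (M:ℝ)/2) - 1) * ((M:ℝ)/2 + ((((M:ℤ)-1 : ℤ):ℝ) - (M:ℝ)/2) + 2) *
        ((M:ℝ)/2 + ((((M:ℤ)-1 : ℤ):ℝ) - (M:ℝ)/2) + 1) * ((M:ℝ)/2 + ((((M:ℤ)-1 : ℤ):ℝ) - (M:ℝ)/2))) = 0 from by
          push_cast; ring,
      Real.sqrt_zero, mul_zero]
  have hb1 : b12 ψ M ((M:ℤ)-1+1) = Real.sqrt 6 * Real.sin ψ^2 * Real.cos ψ * (-((M:ℝ)/2)) *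
      Real.sqrt (((M:ℝ)+1)*(M:ℝ)) := by
    unfold b12; push_cast; ring_nf
  have hg : g12 ψ M ((M:ℤ)-1) = -((3*Real.sin ψ^2-2)*((M:ℝ)/2-1)) *
      Real.sqrt (6*((M:ℝ)-1)) := by
    unfold g12
    rw [show (M:ℤ) - ((M:ℤ)-1) = 1 from by ring, zpow_one]
    push_cast; ring_nf
  have hd : d12 ψ M ((M:ℤ)-1-1) = -(Real.sqrt 6) * Real.sin ψ^2 * Real.cos ψ *
      (3*(M:ℝ)/2-4) * Real.sqrt (3*2) := by
    unfold d12; push_cast; ring_nf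
  have hb3 : b12 ψ M ((M:ℤ)-1-1) = Real.sqrt 6 * Real.sin ψ^2 * Real.cos ψ * (4-(M:ℝ)/2) *
      Real.sqrt (((M:ℝ)-1)*((M:ℝ)-2)) := by
    unfold b12; push_cast; ring_nf
  have he : e12 ψ M ((M:ℤ)-1) = Real.sqrt 6 / 4 * Real.sin ψ^2 *
      Real.sqrt (24*((M:ℝ)-2)) := by
    unfold e12
    rw [show (M:ℤ) - ((M:ℤ)-1) = 1 from by ring, zpow_one]
    push_cast; ring_nf
  have H2 : Real.sqrt 6 * Real.sqrt (((M:ℝ)+1)*(M:ℝ)) * Real.sqrt (6*((M:ℝ)-1)) *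
      Real.sqrt 6 * Real.sqrt (3*2) = 36 * Real.sqrt ((M:ℝ)*((M:ℝ)-1)*((M:ℝ)+1)) :=
    sqrt_mul5 (by norm_num) (by nlinarith) (by nlinarith) (by norm_num) (by norm_num)
      (by ring)
  have H3 : Real.sqrt 6 * Real.sqrt (((M:ℝ)-1)*((M:ℝ)-2)) * Real.sqrt 6 *
      Real.sqrt (((M:ℝ)+1)*(M:ℝ)) * Real.sqrt 6 * Real.sqrt (24*((M:ℝ)-2))
      = (72*((M:ℝ)-2)) * Real.sqrt ((M:ℝ)*((M:ℝ)-1)*((M:ℝ)+1)) :=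
    sqrt_mul6 (by norm_num) (by nlinarith) (by norm_num) (by nlinarith) (by norm_num)
      (by nlinarith) (by ring)
  simp only [detC]
  rw [ha, hb1, hg, hd, hb3, he]
  linear_combination
    (-((Real.sin ψ^2*Real.cos ψ*(-((M:ℝ)/2))) * (-((3*Real.sin ψ^2-2)*((M:ℝ)/2-1))) *
      (-(Real.sin ψ^2*Real.cos ψ)*(3*(M:ℝ)/2-4)))) * H2 +
    ((Real.sin ψ^2*Real.cos ψ*(4-(M:ℝ)/2)) * (Real.sin ψ^2*Real.cos ψ*(-((M:ℝ)/2))) *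
      (Real.sin ψ^2/4)) * H3

set_option maxHeartbeats 1000000 in
private lemma keyB (ψ : ℝ) (M : ℕ) (hM : 3 ≤ M) :
    detC ψ M ((M:ℤ)-2) = 18 * (Real.sin ψ^2)^2 * Real.cos ψ^2 * ((M:ℝ)-4)
      * Real.sqrt ((M:ℝ)*((M:ℝ)-1)*((M:ℝ)-2))
      * (3*((M:ℝ)-4)^2 - Real.sin ψ^2 * (5*(M:ℝ)^2-48*(M:ℝ)+96)) := by
  have hMR : (3:ℝ) ≤ (M:ℝ) := by exact_mod_cast hM
  have hX2 : (0:ℝ) ≤ (M:ℝ)*((M:ℝ)-1)*((M:ℝ)-2) := by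
    apply mul_nonneg (mul_nonneg (by linarith) (by linarith)) (by linarith)
  have ha2 : a12 ψ M ((M:ℤ)-2) = Real.sqrt 6 / 4 * Real.sin ψ^2 *
      Real.sqrt (4*((M:ℝ)*((M:ℝ)-1)*((M:ℝ)-2))) := by
    unfold a12
    rw [show (M:ℤ) - ((M:ℤ)-2) = 2 from by ring,
      show ((-1:ℝ))^(2:ℤ) = 1 from by norm_num]
    push_cast; ring_nf
  have hd3 : d12 ψ M ((M:ℤ)-2-1) = -(Real.sqrt 6) * Real.sin ψ^2 * Real.cos ψ *
      (3*(M:ℝ)/2-6) * Real.sqrt (4*3) := by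
    unfold d12; push_cast; ring_nf
  have hd1 : d12 ψ M ((M:ℤ)-2+1) = -(Real.sqrt 6) * Real.sin ψ^2 * Real.cos ψ *
      (3*(M:ℝ)/2-2) * Real.sqrt (2*1) := by
    unfold d12; push_cast; ring_nf
  have hb1 : b12 ψ M ((M:ℤ)-2+1) = Real.sqrt 6 * Real.sin ψ^2 * Real.cos ψ *
      (2-(M:ℝ)/2) * Real.sqrt ((M:ℝ)*((M:ℝ)-1)) := by
    unfold b12; push_cast; ring_nf
  have hg2 : g12 ψ M ((M:ℤ)-2) = (3*Real.sin ψ^2-2)*((M:ℝ)/2-2) *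
      Real.sqrt (6*((M:ℝ)-2)*2) := by
    unfold g12
    rw [show (M:ℤ) - ((M:ℤ)-2) = 2 from by ring,
      show ((-1:ℝ))^(2:ℤ) = 1 from by norm_num]
    push_cast; ring_nf
  have hb3 : b12 ψ M ((M:ℤ)-2-1) = Real.sqrt 6 * Real.sin ψ^2 * Real.cos ψ *
      (6-(M:ℝ)/2) * Real.sqrt (((M:ℝ)-2)*((M:ℝ)-3)) := by
    unfold b12; push_cast; ring_nf
  have he2 : e12 ψ M ((M:ℤ)-2) = -(Real.sqrt 6 / 4) * Real.sin ψ^2 *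
      Real.sqrt (96*((M:ℝ)-3)) := by
    unfold e12
    rw [show (M:ℤ) - ((M:ℤ)-2) = 2 from by ring,
      show ((-1:ℝ))^(2:ℤ) = 1 from by norm_num]
    push_cast; ring_nf
  have H1 : Real.sqrt 6 * Real.sqrt (4*((M:ℝ)*((M:ℝ)-1)*((M:ℝ)-2))) * Real.sqrt 6 *
      Real.sqrt (4*3) * Real.sqrt 6 * Real.sqrt (2*1)
      = 144 * Real.sqrt ((M:ℝ)*((M:ℝ)-1)*((M:ℝ)-2)) :=
    sqrt_mul6 (by norm_num) (by linarith) (by norm_num) (by norm_num) (by norm_num)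
      (by norm_num) (by ring)
  have H2 : Real.sqrt 6 * Real.sqrt ((M:ℝ)*((M:ℝ)-1)) * Real.sqrt (6*((M:ℝ)-2)*2) *
      Real.sqrt 6 * Real.sqrt (4*3) = 72 * Real.sqrt ((M:ℝ)*((M:ℝ)-1)*((M:ℝ)-2)) :=
    sqrt_mul5 (by norm_num) (by nlinarith) (by nlinarith) (by norm_num) (by norm_num)
      (by ring)
  have H3 : Real.sqrt 6 * Real.sqrt (((M:ℝ)-2)*((M:ℝ)-3)) * Real.sqrt 6 *
      Real.sqrt ((M:ℝ)*((M:ℝ)-1)) * Real.sqrt 6 * Real.sqrt (96*((M:ℝ)-3))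
      = (144*((M:ℝ)-3)) * Real.sqrt ((M:ℝ)*((M:ℝ)-1)*((M:ℝ)-2)) :=
    sqrt_mul6 (by norm_num) (by nlinarith) (by norm_num) (by nlinarith) (by norm_num)
      (by nlinarith) (by ring)
  simp only [detC]
  rw [ha2, hd3, hd1, hb1, hg2, hb3, he2]
  linear_combination
    (Real.sin ψ^2/4 * (-(Real.sin ψ^2*Real.cos ψ)*(3*(M:ℝ)/2-6)) *
      (-(Real.sin ψ^2*Real.cos ψ)*(3*(M:ℝ)/2-2))) * H1 +
    (-((Real.sin ψ^2*Real.cos ψ*(2-(M:ℝ)/2)) * ((3*Real.sin ψ^2-2)*((M:ℝ)/2-2)) *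
      (-(Real.sin ψ^2*Real.cos ψ)*(3*(M:ℝ)/2-6)))) * H2 +
    ((Real.sin ψ^2*Real.cos ψ*(6-(M:ℝ)/2)) * (Real.sin ψ^2*Real.cos ψ*(2-(M:ℝ)/2)) *
      (-(Real.sin ψ^2/4))) * H3

/-- the half-integer `m ≥ 3/2` is encoded as `m = M/2` with `M` odd, `M ≥ 3`;
`t ∈ I_m` is encoded as `t = k − M/2`, `0 ≤ k ≤ M`. If the determinant condition holds at
every `t ∈ I_m`, then `t = m−1` forces `sin²ψ = (3m−4)/(5m−8)`, and for `m ≥ 5/2` the case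
`t = m−2` forces `sin²ψ = 12(m−2)²/(5m²−24m+24)`; hence no `ψ ∈ (0, π/2)` satisfies the
determinant condition at all `t ∈ I_m`. -/
theorem stmt12 (M : ℕ) (hModd : Odd M) (hM : 3 ≤ M) (ψ : ℝ) (hψ0 : 0 < ψ)
    (hψ1 : ψ < Real.pi / 2) :
    ((∀ k : ℤ, 0 ≤ k → k ≤ (M : ℤ) → detC ψ M k = 0) →
      Real.sin ψ ^ 2 = (3 * ((M : ℝ) / 2) - 4) / (5 * ((M : ℝ) / 2) - 8)) ∧
    ((5 : ℝ) / 2 ≤ (M : ℝ) / 2 →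
      (∀ k : ℤ, 0 ≤ k → k ≤ (M : ℤ) → detC ψ M k = 0) →
      Real.sin ψ ^ 2
        = 12 * ((M : ℝ) / 2 - 2) ^ 2 / (5 * ((M : ℝ) / 2) ^ 2 - 24 * ((M : ℝ) / 2) + 24)) ∧
    ¬ (∀ k : ℤ, 0 ≤ k → k ≤ (M : ℤ) → detC ψ M k = 0) := by

  have main : ¬ (∀ k : ℤ, 0 ≤ k → k ≤ (M : ℤ) → detC ψ M k = 0) := by
    intro h
    have hMR : (3:ℝ) ≤ (M:ℝ) := by exact_mod_cast hM
    have hsin : 0 < Real.sin ψ :=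
      Real.sin_pos_of_pos_of_lt_pi hψ0 (by linarith [Real.pi_pos])
    have hcos : 0 < Real.cos ψ :=
      Real.cos_pos_of_mem_Ioo ⟨by linarith [Real.pi_pos], hψ1⟩
    set s := Real.sin ψ ^ 2 with hsdef
    have hs2 : 0 < s := by positivity
    have hX1 : 0 < Real.sqrt ((M:ℝ)*((M:ℝ)-1)*((M:ℝ)+1)) :=
      Real.sqrt_pos.mpr (mul_pos (mul_pos (by linarith) (by linarith)) (by linarith))
    have hX2 : 0 < Real.sqrt ((M:ℝ)*((M:ℝ)-1)*((M:ℝ)-2)) :=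
      Real.sqrt_pos.mpr
        (mul_pos (mul_pos (by linarith) (by linarith)) (by linarith))
    have hA0 := h ((M:ℤ)-1) (by omega) (by omega)
    rw [keyA ψ M hM] at hA0
    have hpreA : (0:ℝ) < 36 * s^2 * Real.cos ψ^2 * ((M:ℝ)/2) * ((M:ℝ)/2-1) *
        Real.sqrt ((M:ℝ)*((M:ℝ)-1)*((M:ℝ)+1)) :=
      mul_pos (mul_pos (mul_pos (mul_pos (mul_pos (by norm_num) (by positivity))
        (by positivity)) (by linarith)) (by linarith)) hX1
    have EA : s * (5*(M:ℝ)-16) - (3*(M:ℝ)-8) = 0 :=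
      (mul_eq_zero.mp hA0).resolve_left (ne_of_gt hpreA)
    have hB0 := h ((M:ℤ)-2) (by omega) (by omega)
    rw [keyB ψ M hM] at hB0
    have hM4 : (M:ℝ) - 4 ≠ 0 := by
      have : M ≠ 4 := by obtain ⟨j, hj⟩ := hModd; omega
      intro hcontra
      exact this (by exact_mod_cast (by linarith : (M:ℝ) = 4))
    have hpreB : 18 * s^2 * Real.cos ψ^2 * ((M:ℝ)-4) *
        Real.sqrt ((M:ℝ)*((M:ℝ)-1)*((M:ℝ)-2)) ≠ 0 :=
      mul_ne_zero (mul_ne_zero (mul_ne_zero (mul_ne_zero (by norm_num)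
        (by positivity)) (by positivity)) hM4) (ne_of_gt hX2)
    have EB : 3*((M:ℝ)-4)^2 - s * (5*(M:ℝ)^2-48*(M:ℝ)+96) = 0 :=
      (mul_eq_zero.mp hB0).resolve_left hpreB
    have hM35 : M = 3 ∨ 5 ≤ M := by obtain ⟨j, hj⟩ := hModd; omega
    rcases hM35 with h3 | h5
    · subst h3
      norm_num at EA
      linarith
    · have hM5R : (5:ℝ) ≤ (M:ℝ) := by exact_mod_cast h5
      have key : (16:ℝ)*(M:ℝ)*((M:ℝ)-3) = 0 := by
        linear_combination (5*(M:ℝ)^2-48*(M:ℝ)+96) * EA + (5*(M:ℝ)-16) * EB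
      nlinarith
  exact ⟨fun h => absurd h main, fun _ h => absurd h main, main⟩
end

section
/- Let M_A be the m×m adjacency matrix of the graph A_m' (a path on m vertices with a single loop at the first vertex and a single loop at the last vertex, m ≥ 3), with entries M_A[1,1]=1, M_A[m,m]=1, M_A[i,i+1]=M_A[i+1,i]=1 and all other entries 0, and let M_B = [[1,1],[1,1]] be the adjacency matrix of the graph D₁ (two vertices each with a loop, joined by an edge). Then there is no m×2 matrix Λ with nonnegative integer entries whose first column is the standard basis vector e₁ satisfying Λ M_B = M_A Λ. -/
/-- The adjacency matrix `M_A` of the graph `A_m'`: a path on `m` vertices with a single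
loop at the first vertex and a single loop at the last vertex. -/
def MA (m : ℕ) : Matrix (Fin m) (Fin m) ℕ :=
  Matrix.of fun i j : Fin m =>
    if (i.val = 0 ∧ j.val = 0) ∨ (i.val = m - 1 ∧ j.val = m - 1) ∨
        i.val + 1 = j.val ∨ j.val + 1 = i.val then 1 else 0

/-- The adjacency matrix `M_B = [[1,1],[1,1]]` of the graph `D₁`. -/
def MB : Matrix (Fin 2) (Fin 2) ℕ := !![1, 1; 1, 1]

/-- for `m ≥ 3` there is no `m × 2` matrix `Λ` with nonnegative integer
entries, first column the standard basis vector `e₁`, intertwining `M_B` and `M_A`. -/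
theorem stmt16 (m : ℕ) (hm : 3 ≤ m) :
    ¬ ∃ Λ : Matrix (Fin m) (Fin 2) ℕ,
        (∀ i : Fin m, Λ i 0 = if i.val = 0 then 1 else 0) ∧
        Λ * MB = MA m * Λ := by
  rintro ⟨Λ, h1, h2⟩
  obtain ⟨i0, hi0⟩ : ∃ i : Fin m, i.val = 0 := ⟨⟨0, by omega⟩, rfl⟩
  obtain ⟨i1, hi1⟩ : ∃ i : Fin m, i.val = 1 := ⟨⟨1, by omega⟩, rfl⟩
  obtain ⟨i2, hi2⟩ : ∃ i : Fin m, i.val = 2 := ⟨⟨2, by omega⟩, rfl⟩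
  -- key: column 0 of MA * Λ equals column 0 of MA
  have key : ∀ i : Fin m, (MA m * Λ) i 0 = MA m i i0 := by
    intro i
    rw [Matrix.mul_apply]
    have h : ∀ j : Fin m, MA m i j * Λ j 0 = if j = i0 then MA m i i0 else 0 := by
      intro j
      rw [h1]
      by_cases hj : j = i0
      · subst hj; simp [hi0]
      · have hv : ¬ j.val = 0 := fun h => hj (Fin.ext (h.trans hi0.symm))
        simp [hv, hj]
    simp only [h, Finset.sum_ite_eq', Finset.mem_univ, if_true]
  have e1 := congrFun (congrFun h2 i1) 0
  have e2 := congrFun (congrFun h2 i2) 0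
  have e3 := congrFun (congrFun h2 i2) 1
  rw [key] at e1 e2
  have hA1 : MA m i1 i0 = 1 := by
    simp only [MA, Matrix.of_apply]; rw [if_pos]; omega
  have hA2 : MA m i2 i0 = 0 := by
    simp only [MA, Matrix.of_apply]; rw [if_neg]; omega
  have hA21 : MA m i2 i1 = 1 := by
    simp only [MA, Matrix.of_apply]; rw [if_pos]; omega
  rw [hA1] at e1
  rw [hA2] at e2
  rw [Matrix.mul_apply] at e3
  simp [MB, Matrix.mul_apply, Fin.sum_univ_two] at e1 e2 e3
  have h10 : Λ i1 0 = 0 := by rw [h1]; simp [hi1]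
  have h11 : Λ i1 1 = 1 := by omega
  have h21 : Λ i2 1 = 0 := by omega
  have h20 : Λ i2 0 = 0 := by omega
  have hle : MA m i2 i1 * Λ i1 1 ≤ ∑ j : Fin m, MA m i2 j * Λ j 1 :=
    Finset.single_le_sum (f := fun j : Fin m => MA m i2 j * Λ j 1)
      (fun j _ => Nat.zero_le _) (Finset.mem_univ i1)
  rw [hA21, h11] at hle
  omega
end
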